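/- For a\in(0,1/2] and b>0 with 4a-4a^2-b^2>0, set D=\sqrt{4a-4a^2-b^2} (positive real square root) and define m(a,b) = -\tfrac{1}{2}\Big[(1-b)\arctan\frac{bD}{2-2a-b^2} - a\arctan\frac{bD}{2a-2a^2-b^2} - 2b\arctan\frac{D}{2+b-2a}\Big]. Then for every \varepsilon>0 there exists \delta>0 such that for all a\in(0,1/2] and all b>0 with b<\delta and b^2/a<\delta, one has \Big|\frac{m(a,b)}{b\arctan\sqrt{a/(1-a)}} - 1\Big| < \varepsilon. That is, m \sim b\arctan\sqrt{a/(1-a)} as b\to 0 and b^2/a\to 0. -/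

import Mathlib

/-!
Write `s = √a`, `t = √(1 - a)` and `D = √(4a - 4a² - b²)`. Since `4a - 4a² = (2st)²`, `D` differs
from `2st` by at most `b² / (2st)`, so the argument `D / (2 + b - 2a)` of the last arctangent is
`s / t + O((b + b²/a) s)`; this term gives `b arctan (s / t)`. The other two arguments
`x = bD / (2 - 2a - b²) = O(b s)` and `y = bD / (2a - 2a² - b²) = O(b / s)` are small, and in
`x - a y = -b³ D (1 - a) / ((2 - 2a - b²)(2a - 2a² - b²)) = O((b²/a) b s)` the leading terms
cancel, so replacing `arctan` by the identity shows `(1 - b) arctan x - a arctan y = O((b + b²/a) b s)`.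
Finally `arctan (s / t) = arcsin s ≥ s`, so the relative error is `O(b + b²/a)`.
-/

/-- `m(a,b)` as in equation (71) of the paper. -/
noncomputable def mConst (a b : ℝ) : ℝ :=
  -(1 / 2) *
    ((1 - b) * Real.arctan (b * Real.sqrt (4 * a - 4 * a ^ 2 - b ^ 2) / (2 - 2 * a - b ^ 2))
      - a * Real.arctan (b * Real.sqrt (4 * a - 4 * a ^ 2 - b ^ 2) / (2 * a - 2 * a ^ 2 - b ^ 2))
      - 2 * b * Real.arctan (Real.sqrt (4 * a - 4 * a ^ 2 - b ^ 2) / (2 + b - 2 * a)))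

open Real

namespace Real

theorem arctan_le_self {x : ℝ} (hx : 0 ≤ x) : arctan x ≤ x := by
  simpa only [tan_arctan] using le_tan (arctan_nonneg.2 hx) (arctan_lt_pi_div_two x)

theorem self_sub_cube_div_three_le_arctan {x : ℝ} (hx : 0 ≤ x) : x - x ^ 3 / 3 ≤ arctan x := by
  have hmono : Monotone fun y : ℝ => arctan y - (y - y ^ 3 / 3) := by
    refine monotone_of_deriv_nonneg
      (differentiable_arctan.sub (differentiable_id.sub ((differentiable_pow 3).div_const 3)))
      fun y => ?_
    have hderiv : HasDerivAt (fun y : ℝ => arctan y - (y - y ^ 3 / 3)) (y ^ 4 / (1 + y ^ 2)) y :=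
      ((hasDerivAt_arctan y).sub ((hasDerivAt_id' y).sub ((hasDerivAt_pow 3 y).div_const 3)))
        |>.congr_deriv (by field_simp; ring)
    rw [hderiv.deriv]; positivity
  simpa using hmono hx

theorem abs_arctan_sub_self_le {x : ℝ} (hx : 0 ≤ x) : |arctan x - x| ≤ x ^ 3 / 3 :=
  abs_le.2 ⟨by linarith [self_sub_cube_div_three_le_arctan hx],
    by linarith [arctan_le_self hx, pow_nonneg hx 3]⟩

theorem lipschitzWith_arctan : LipschitzWith 1 arctan :=
  lipschitzWith_of_nnnorm_deriv_le differentiable_arctan fun x => by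
    rw [← NNReal.coe_le_coe, coe_nnnorm, deriv_arctan, norm_of_nonneg (by positivity)]
    exact div_le_one_of_le₀ (by nlinarith [sq_nonneg x]) (by positivity)

theorem abs_arctan_sub_arctan_le (x y : ℝ) : |arctan x - arctan y| ≤ |x - y| := by
  simpa [dist_eq] using lipschitzWith_arctan.dist_le_mul x y

theorem arctan_sqrt_div_one_sub_eq_arcsin {a : ℝ} (ha : 0 ≤ a) (ha' : a < 1) :
    arctan √(a / (1 - a)) = arcsin √a := by
  rw [arcsin_eq_arctan, sq_sqrt ha, sqrt_div ha]
  constructor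
  · linarith [sqrt_nonneg a]
  · simpa using sqrt_lt_sqrt ha ha'

theorem sqrt_le_arctan_sqrt_div_one_sub {a : ℝ} (ha : 0 ≤ a) (ha' : a < 1) :
    √a ≤ arctan √(a / (1 - a)) := by
  rw [arctan_sqrt_div_one_sub_eq_arcsin ha ha']
  simpa [sin_arcsin (by linarith [sqrt_nonneg a]) (sqrt_le_one.2 ha'.le)] using
    sin_le (arcsin_nonneg.2 (sqrt_nonneg a))

theorem sqrt_sq_sub_sq_le {u : ℝ} (b : ℝ) (hu : 0 ≤ u) : √(u ^ 2 - b ^ 2) ≤ u :=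
  (sqrt_le_sqrt (by nlinarith [sq_nonneg b])).trans_eq (sqrt_sq hu)

theorem sub_sqrt_sq_sub_sq_mul_le {u b : ℝ} (hu : 0 ≤ u) (hbu : b ^ 2 ≤ u ^ 2) :
    (u - √(u ^ 2 - b ^ 2)) * u ≤ b ^ 2 := by
  have hsq := sq_sqrt (sub_nonneg.2 hbu)
  nlinarith [sqrt_nonneg (u ^ 2 - b ^ 2), sqrt_sq_sub_sq_le b hu]

end Real

theorem abs_one_sub_mul_arctan_sub_mul_arctan_le {a b x y : ℝ} (ha : 0 ≤ a) (hb : 0 ≤ b)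
    (hb' : b ≤ 1) (hx : 0 ≤ x) (hy : 0 ≤ y) :
    |(1 - b) * arctan x - a * arctan y| ≤ x ^ 3 / 3 + a * (y ^ 3 / 3) + b * x + |x - a * y| := by
  have hx' : (1 - b) * |arctan x - x| ≤ x ^ 3 / 3 :=
    (mul_le_of_le_one_left (abs_nonneg _) (by linarith)).trans (abs_arctan_sub_self_le hx)
  have hy' := mul_le_mul_of_nonneg_left (abs_arctan_sub_self_le hy) ha
  calc |(1 - b) * arctan x - a * arctan y|
      = |(1 - b) * (arctan x - x) - a * (arctan y - y) - b * x + (x - a * y)| := by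
        congr 1; ring
    _ ≤ |(1 - b) * (arctan x - x)| + |a * (arctan y - y)| + |b * x| + |x - a * y| :=
      (abs_add_le _ _).trans (add_le_add_left ((abs_sub _ _).trans
        (add_le_add_left (abs_sub _ _) _)) _)
    _ ≤ _ := by
      rw [abs_mul, abs_mul, abs_mul, abs_of_nonneg ha, abs_of_nonneg hb, abs_of_nonneg hx,
        abs_of_nonneg (by linarith : 0 ≤ 1 - b)]
      linarith

theorem abs_remainder_linearization_le {a b s D : ℝ} (hs : 0 < s) (hsa : s ^ 2 = a)
    (ha : a ≤ 1 / 2) (hb : 0 ≤ b) (hba : b ^ 2 ≤ a / 2) (hD : 0 ≤ D) (hDs : D ≤ 2 * s) :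
    |b * D / (2 - 2 * a - b ^ 2) - a * (b * D / (2 * a - 2 * a ^ 2 - b ^ 2))|
      ≤ 6 * (b ^ 2 / a) * (b * s) := by
  have ha0 : 0 < a := hsa ▸ pow_pos hs 2
  set c := b ^ 2 / a with hc_def
  have hc : b ^ 2 = c * a := by rw [hc_def, div_mul_cancel₀ _ ha0.ne']
  have hc0 : 0 ≤ c := by positivity
  have hP : 3 / 4 ≤ 2 - 2 * a - b ^ 2 := by nlinarith
  have hQ : a / 2 ≤ 2 * a - 2 * a ^ 2 - b ^ 2 := by nlinarith
  have hPQ : 3 / 4 * (a / 2) ≤ (2 - 2 * a - b ^ 2) * (2 * a - 2 * a ^ 2 - b ^ 2) :=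
    mul_le_mul hP hQ (by positivity) (by linarith)
  rw [mul_div_assoc', div_sub_div _ _ (by linarith) (by linarith),
    show b * D * (2 * a - 2 * a ^ 2 - b ^ 2) - (2 - 2 * a - b ^ 2) * (a * (b * D))
      = -(b ^ 3 * D * (1 - a)) by ring,
    abs_div, abs_neg, abs_of_nonneg (mul_nonneg (by positivity) (by linarith)),
    abs_of_pos (by linarith), div_le_iff₀ (by linarith)]
  have hD1 : D * (1 - a) ≤ 2 * s := by nlinarith [mul_nonneg hD ha0.le]
  calc b ^ 3 * D * (1 - a) = b ^ 3 * (D * (1 - a)) := by ring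
    _ ≤ b ^ 3 * (2 * s) := by gcongr
    _ = 2 * (c * a * b * s) := by linear_combination 2 * b * s * hc
    _ ≤ 6 * c * (b * s) * (3 / 4 * (a / 2)) := by
        nlinarith [mul_nonneg (mul_nonneg (mul_nonneg hc0 ha0.le) hb) hs.le]
    _ ≤ _ := mul_le_mul_of_nonneg_left hPQ (by positivity)

theorem abs_remainder_le {a b s D : ℝ} (hs : 0 < s) (hsa : s ^ 2 = a) (ha : a ≤ 1 / 2)
    (hb : 0 < b) (hb' : b ≤ 1 / 2) (hba : b ^ 2 ≤ a / 2) (hD : 0 ≤ D) (hDs : D ≤ 2 * s) :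
    |(1 - b) * arctan (b * D / (2 - 2 * a - b ^ 2))
        - a * arctan (b * D / (2 * a - 2 * a ^ 2 - b ^ 2))|
      ≤ (6 * b + 28 * (b ^ 2 / a)) * (b * s) := by
  have ha0 : 0 < a := hsa ▸ pow_pos hs 2
  set c := b ^ 2 / a with hc_def
  have hc : b ^ 2 = c * s ^ 2 := by rw [hc_def, hsa, div_mul_cancel₀ _ ha0.ne']
  have hP : 3 / 4 ≤ 2 - 2 * a - b ^ 2 := by nlinarith
  have hQ : a / 2 ≤ 2 * a - 2 * a ^ 2 - b ^ 2 := by nlinarith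
  have hlin := abs_remainder_linearization_le hs hsa ha hb.le hba hD hDs
  set x := b * D / (2 - 2 * a - b ^ 2) with hx_def
  set y := b * D / (2 * a - 2 * a ^ 2 - b ^ 2) with hy_def
  have hx0 : 0 ≤ x := div_nonneg (by positivity) (by linarith)
  have hy0 : 0 ≤ y := div_nonneg (by positivity) (by linarith)
  have hx : x ≤ 3 * b * s := by
    rw [hx_def, div_le_iff₀ (by linarith)]
    nlinarith [mul_le_mul_of_nonneg_left hP (by positivity : 0 ≤ 3 * b * s)]
  have hys : y * s ≤ 4 * b := by
    rw [hy_def, div_mul_eq_mul_div, div_le_iff₀ (by linarith)]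
    nlinarith [mul_le_mul_of_nonneg_left hDs (by positivity : 0 ≤ b * s)]
  have hx3 : x ^ 3 / 3 ≤ 3 * b * (b * s) := by
    have hx3 : x ^ 3 ≤ (3 * b * s) ^ 3 := pow_le_pow_left₀ hx0 hx 3
    have hbs : b * s ^ 2 ≤ 1 / 4 := by nlinarith
    nlinarith [mul_le_mul_of_nonneg_left hbs (by positivity : 0 ≤ b * (b * s))]
  have hy3 : a * (y ^ 3 / 3) ≤ 22 * c * (b * s) := by
    have hay3 : (a * y ^ 3) * s ≤ (64 * c * (b * s)) * s :=
      calc (a * y ^ 3) * s = (y * s) ^ 3 := by rw [← hsa]; ring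
        _ ≤ (4 * b) ^ 3 := pow_le_pow_left₀ (by positivity) hys 3
        _ = (64 * c * (b * s)) * s := by linear_combination 64 * b * hc
    nlinarith [le_of_mul_le_mul_right hay3 hs]
  calc _ ≤ x ^ 3 / 3 + a * (y ^ 3 / 3) + b * x + |x - a * y| :=
        abs_one_sub_mul_arctan_sub_mul_arctan_le ha0.le hb.le (by linarith) hx0 hy0
    _ ≤ _ := by nlinarith [mul_le_mul_of_nonneg_left hx hb.le]

theorem abs_div_sub_div_le {a b s t D : ℝ} (hs : 0 < s) (hsa : s ^ 2 = a) (ht : 0 < t)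
    (hta : t ^ 2 = 1 - a) (ha : a ≤ 1 / 2) (hb : 0 ≤ b) (hDu : D ≤ 2 * s * t)
    (hgap : (2 * s * t - D) * (2 * s * t) ≤ b ^ 2) :
    |D / (2 + b - 2 * a) - s / t| ≤ 2 * (b + b ^ 2 / a) * s := by
  have ha0 : 0 < a := hsa ▸ pow_pos hs 2
  have hR : 1 ≤ 2 + b - 2 * a := by linarith
  have ht2 : 1 / 2 ≤ t := by nlinarith
  have hRt : 1 / 2 ≤ (2 + b - 2 * a) * t := by nlinarith
  have hgap' : t * (2 * s * t - D) ≤ b ^ 2 / a * s / 2 := by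
    rw [le_div_iff₀ two_pos, ← hsa, div_mul_eq_mul_div, le_div_iff₀ (by positivity)]
    nlinarith
  have hRt0 : 0 < (2 + b - 2 * a) * t := by linarith
  rw [div_sub_div _ _ (by linarith) ht.ne', abs_div, abs_of_pos hRt0, div_le_iff₀ hRt0,
    show D * t - (2 + b - 2 * a) * s = -(t * (2 * s * t - D) + s * b) by
      linear_combination (2 * s) * hta,
    abs_neg, abs_of_nonneg (by nlinarith)]
  nlinarith [mul_le_mul_of_nonneg_left hRt (by positivity : 0 ≤ 2 * (b + b ^ 2 / a) * s)]

theorem abs_mConst_sub_le {a b : ℝ} (ha : 0 < a) (ha' : a ≤ 1 / 2) (hb : 0 < b) (hb' : b ≤ 1 / 2)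
    (hba : b ^ 2 ≤ a / 2) :
    |mConst a b - b * arctan √(a / (1 - a))| ≤ 16 * (b + b ^ 2 / a) * (b * √a) := by
  rw [mConst, sqrt_div ha.le]
  set s := √a
  set t := √(1 - a)
  have hs : 0 < s := sqrt_pos.2 ha
  have ht : 0 < t := sqrt_pos.2 (by linarith)
  have hsa : s ^ 2 = a := sq_sqrt ha.le
  have hta : t ^ 2 = 1 - a := sq_sqrt (by linarith)
  have hdisc : 4 * a - 4 * a ^ 2 - b ^ 2 = (2 * s * t) ^ 2 - b ^ 2 := by
    rw [mul_pow, mul_pow, hsa, hta]; ring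
  set D := √(4 * a - 4 * a ^ 2 - b ^ 2) with hD_def
  rw [hdisc] at hD_def
  have hDu : D ≤ 2 * s * t := hD_def ▸ sqrt_sq_sub_sq_le b (by positivity)
  have hgap : (2 * s * t - D) * (2 * s * t) ≤ b ^ 2 :=
    hD_def ▸ sub_sqrt_sq_sub_sq_mul_le (by positivity) (by nlinarith)
  have hDs : D ≤ 2 * s :=
    hDu.trans (mul_le_of_le_one_right (by positivity) (sqrt_le_one.2 (by linarith)))
  have hremainder := abs_remainder_le hs hsa ha' hb hb' hba (sqrt_nonneg _) hDs
  have hmain : |arctan (D / (2 + b - 2 * a)) - arctan (s / t)| ≤ 2 * (b + b ^ 2 / a) * s :=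
    (abs_arctan_sub_arctan_le _ _).trans
      (abs_div_sub_div_le hs hsa ht hta ha' hb.le hDu hgap)
  calc _ = |-(1 / 2) * ((1 - b) * arctan (b * D / (2 - 2 * a - b ^ 2))
            - a * arctan (b * D / (2 * a - 2 * a ^ 2 - b ^ 2)))
          + b * (arctan (D / (2 + b - 2 * a)) - arctan (s / t))| := by
        congr 1; ring
    _ ≤ 1 / 2 * ((6 * b + 28 * (b ^ 2 / a)) * (b * s)) + b * (2 * (b + b ^ 2 / a) * s) := by
        refine (abs_add_le _ _).trans (add_le_add ?_ ?_)
        · rw [abs_mul, abs_neg, abs_of_pos one_half_pos]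
          exact mul_le_mul_of_nonneg_left hremainder one_half_pos.le
        · rw [abs_mul, abs_of_pos hb]
          exact mul_le_mul_of_nonneg_left hmain hb.le
    _ ≤ 16 * (b + b ^ 2 / a) * (b * s) := by
        have : 0 ≤ b ^ 2 / a := by positivity
        nlinarith [mul_pos hb hs]

/-- `m ∼ b arctan √(a/(1-a))` as `b → 0` and `b²/a → 0`, uniformly for
`a ∈ (0, 1/2]`. -/
theorem mConst_asymptotics :
    ∀ ε > (0 : ℝ), ∃ δ > (0 : ℝ), ∀ a b : ℝ,
      a ∈ Set.Ioc (0 : ℝ) (1 / 2) → 0 < b → 4 * a - 4 * a ^ 2 - b ^ 2 > 0 →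
      b < δ → b ^ 2 / a < δ →
      |mConst a b / (b * Real.arctan (Real.sqrt (a / (1 - a)))) - 1| < ε := by
  intro ε hε
  refine ⟨min (1 / 2) (ε / 32), by positivity, ?_⟩
  rintro a b ⟨ha, ha'⟩ hb - hbδ hcδ
  have hb' : b < 1 / 2 := hbδ.trans_le (min_le_left _ _)
  have hc' : b ^ 2 / a < 1 / 2 := hcδ.trans_le (min_le_left _ _)
  have hT : √a ≤ arctan √(a / (1 - a)) := sqrt_le_arctan_sqrt_div_one_sub ha.le (by linarith)
  have hbT : 0 < b * arctan √(a / (1 - a)) := mul_pos hb ((sqrt_pos.2 ha).trans_le hT)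
  rw [div_sub_one hbT.ne', abs_div, abs_of_pos hbT, div_lt_iff₀ hbT]
  calc |mConst a b - b * arctan √(a / (1 - a))|
      ≤ 16 * (b + b ^ 2 / a) * (b * √a) :=
        abs_mConst_sub_le ha ha' hb hb'.le (by rw [div_lt_iff₀ ha] at hc'; linarith)
    _ < ε * (b * √a) := by
        gcongr
        linarith [min_le_right (1 / 2) (ε / 32)]
    _ ≤ ε * (b * arctan √(a / (1 - a))) := by gcongr
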